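/- arXiv:0711.4345 — 5 statements merged into one kernel-verified Lean document; each statement's English description precedes it below -/
import Mathlib

section
/- Let G be a graph, G' a subgraph of G, and S a perfect dominating set of G (i.e., every vertex of G not in S is adjacent to exactly one vertex of S). Let S' = S ∩ V(G'). Then no two connected components of the subgraph of G' induced by S' are at distance exactly 2 in G'. -/
/-- A perfect dominating set: every vertex not in `S` is adjacent to exactly one vertex of `S`. -/
def IsPDS {V : Type*} (G : SimpleGraph V) (S : Set V) : Prop :=
  ∀ v ∉ S, ∃! u, u ∈ S ∧ G.Adj v u

/-- If `S` is a PDS in `G`, `H` a subgraph of `G`, and `S' = S ∩ V(H)`, then no two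
connected components of the subgraph of `H` induced by `S'` are at distance exactly 2
in `H`: i.e. any two vertices of `S'` lying in distinct components of the induced
subgraph are not at distance 2 in `H`. -/
theorem stmt_0 {V : Type*} (G : SimpleGraph V) (H : G.Subgraph) (S : Set V)
    (hPDS : IsPDS G S)
    (u v : H.verts) (hu : (u : V) ∈ S) (hv : (v : V) ∈ S)
    (hsep : ¬ (H.coe.induce {w : H.verts | (w : V) ∈ S}).Reachable ⟨u, hu⟩ ⟨v, hv⟩) :
    H.coe.dist u v ≠ 2 := by
  intro hdist
  obtain ⟨p, hp⟩ := SimpleGraph.exists_walk_of_dist_ne_zero (by omega : H.coe.dist u v ≠ 0)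
  rw [hdist] at hp
  set w := p.getVert 1 with hw
  have h1 : H.coe.Adj u w := by
    have := p.adj_getVert_succ (by omega : 0 < p.length)
    simpa using this
  have h2 : H.coe.Adj w v := by
    have := p.adj_getVert_succ (by omega : 1 < p.length)
    rw [show (1:ℕ)+1 = p.length by omega, p.getVert_length] at this
    exact this
  have huv : u ≠ v := by
    rintro rfl
    rw [SimpleGraph.dist_self] at hdist; omega
  by_cases hwS : (w : V) ∈ S
  · exact hsep (((show (H.coe.induce {w : H.verts | (w : V) ∈ S}).Adj ⟨u, hu⟩ ⟨w, hwS⟩ from h1).reachable).trans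
      ((show (H.coe.induce {w : H.verts | (w : V) ∈ S}).Adj ⟨w, hwS⟩ ⟨v, hv⟩ from h2).reachable))
  · obtain ⟨x, _, hxuniq⟩ := hPDS (w : V) hwS
    have hGu : G.Adj (w : V) (u : V) := H.adj_sub h1.symm
    have hGv : G.Adj (w : V) (v : V) := H.adj_sub h2
    have e1 : (u : V) = x := hxuniq _ ⟨hu, hGu⟩
    have e2 : (v : V) = x := hxuniq _ ⟨hv, hGv⟩
    exact huv (Subtype.ext (e1.trans e2.symm))
end

section
/- Let Λ be the integer lattice graph on ℤ × ℤ, where (i,j) and (k,l) are adjacent iff |i-k| + |j-l| = 1. If S is a perfect dominating set in Λ and u, v, w are three distinct vertices of S lying in a common unit square Q = {(i,j),(i+1,j),(i,j+1),(i+1,j+1)}, then the fourth vertex of Q also belongs to S. -/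
/-- Adjacency in the integer lattice graph: ℓ¹-distance 1. -/
def latAdj (p q : ℤ × ℤ) : Prop := |p.1 - q.1| + |p.2 - q.2| = 1

lemma key (S : Set (ℤ × ℤ))
    (hPDS : ∀ v ∉ S, ∃! u, u ∈ S ∧ latAdj v u)
    (x a b : ℤ × ℤ) (ha : a ∈ S) (hb : b ∈ S) (hab : a ≠ b)
    (hxa : latAdj x a) (hxb : latAdj x b) : x ∈ S := by
  by_contra hx
  obtain ⟨y, _, huniq⟩ := hPDS x hx
  have h1 := huniq a ⟨ha, hxa⟩
  have h2 := huniq b ⟨hb, hxb⟩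
  exact hab (h1.trans h2.symm)

lemma adj_h (x y : ℤ) : latAdj (x, y) (x + 1, y) := by
  simp [latAdj]

lemma adj_h' (x y : ℤ) : latAdj (x + 1, y) (x, y) := by
  simp [latAdj]

lemma adj_v (x y : ℤ) : latAdj (x, y) (x, y + 1) := by
  simp [latAdj]

lemma adj_v' (x y : ℤ) : latAdj (x, y + 1) (x, y) := by
  simp [latAdj]

/-- If a perfect dominating set of the integer lattice contains three distinct vertices
of a unit square, then it contains the whole square. -/
theorem stmt_1 (S : Set (ℤ × ℤ))
    (hPDS : ∀ v ∉ S, ∃! u, u ∈ S ∧ latAdj v u)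
    (i j : ℤ) (u v w : ℤ × ℤ)
    (hu : u ∈ ({(i, j), (i + 1, j), (i, j + 1), (i + 1, j + 1)} : Set (ℤ × ℤ)))
    (hv : v ∈ ({(i, j), (i + 1, j), (i, j + 1), (i + 1, j + 1)} : Set (ℤ × ℤ)))
    (hw : w ∈ ({(i, j), (i + 1, j), (i, j + 1), (i + 1, j + 1)} : Set (ℤ × ℤ)))
    (huv : u ≠ v) (huw : u ≠ w) (hvw : v ≠ w)
    (hus : u ∈ S) (hvs : v ∈ S) (hws : w ∈ S) :
    ({(i, j), (i + 1, j), (i, j + 1), (i + 1, j + 1)} : Set (ℤ × ℤ)) ⊆ S := by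
  simp only [Set.mem_insert_iff, Set.mem_singleton_iff] at hu hv hw
  have hdiag : (((i + 1, j) : ℤ × ℤ) ∈ S ∧ ((i, j + 1) : ℤ × ℤ) ∈ S) ∨
      (((i, j) : ℤ × ℤ) ∈ S ∧ ((i + 1, j + 1) : ℤ × ℤ) ∈ S) := by
    rcases hu with rfl | rfl | rfl | rfl <;>
      rcases hv with rfl | rfl | rfl | rfl <;>
      rcases hw with rfl | rfl | rfl | rfl <;> tauto
  have hall : ((i, j) : ℤ × ℤ) ∈ S ∧ ((i + 1, j) : ℤ × ℤ) ∈ S ∧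
      ((i, j + 1) : ℤ × ℤ) ∈ S ∧ ((i + 1, j + 1) : ℤ × ℤ) ∈ S := by
    have hne1 : ((i + 1, j) : ℤ × ℤ) ≠ (i, j + 1) := by
      intro h; rw [Prod.mk.injEq] at h; omega
    have hne2 : ((i, j) : ℤ × ℤ) ≠ (i + 1, j + 1) := by
      intro h; rw [Prod.mk.injEq] at h; omega
    rcases hdiag with ⟨hb, hc⟩ | ⟨ha, hd⟩
    · refine ⟨?_, hb, hc, ?_⟩
      · exact key S hPDS _ _ _ hb hc hne1 (adj_h i j) (adj_v i j)
      · exact key S hPDS _ _ _ hb hc hne1 (adj_v' (i+1) j) (adj_h' i (j+1))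
    · refine ⟨ha, ?_, ?_, hd⟩
      · exact key S hPDS _ _ _ ha hd hne2 (adj_h' i j) (adj_v (i+1) j)
      · exact key S hPDS _ _ _ ha hd hne2 (adj_v' i j) (adj_h i (j+1))
  intro p hp
  simp only [Set.mem_insert_iff, Set.mem_singleton_iff] at hp
  rcases hp with rfl | rfl | rfl | rfl <;> tauto
end

section
/- Every connected component of the subgraph of the integer lattice graph Λ induced by a perfect dominating set S is, as a set of vertices, a product I × J of two intervals of integers (i.e., of the form {a,...,b} × {c,...,d}, possibly infinite). -/
/-!
A vertex outside `S` has at most one neighbour in `S`, so a common neighbour of two distinct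
vertices of the component lies in `S`, hence in the component. When a path inside `S` is extended
by one step, the box spanned by its endpoints grows by a segment parallel to a neighbouring
segment of the old box; starting from the new endpoint, this corner-filling property sweeps the
whole segment into the component. Hence the component contains the box `[[p, q]]` spanned by any
two of its points, and a set of pairs with that property is the product of its projections,
which are intervals.
-/

/-- The integer lattice graph on ℤ × ℤ. -/
def latticeGraph : SimpleGraph (ℤ × ℤ) where
  Adj p q := |p.1 - q.1| + |p.2 - q.2| = 1
  symm := ⟨fun p q h => by
    try simp only at h ⊢
    rw [abs_sub_comm q.1 p.1, abs_sub_comm q.2 p.2]; exact h⟩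
  loopless := ⟨fun p h => by simp at h⟩

open Set Interval

theorem Int.forall_mem_uIcc_of_step {f : ℤ → Prop} {c d : ℤ} (hc : f c)
    (step : ∀ y ∈ [[c, d]], ∀ z ∈ [[c, d]], |y - z| = 1 → f y → f z) :
    ∀ y ∈ [[c, d]], f y := by
  rcases le_total c d with hcd | hdc
  · rw [uIcc_of_le hcd] at step ⊢
    rintro y ⟨hcy, hyd⟩
    induction y, hcy using Int.leInduction with
    | base => exact hc
    | succ y hcy ih =>
      exact step y ⟨hcy, by omega⟩ (y + 1) ⟨by omega, hyd⟩ (by simp) (ih (by omega))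
  · rw [uIcc_of_ge hdc] at step ⊢
    rintro y ⟨hdy, hyc⟩
    induction y, hyc using Int.leInductionDown with
    | base => exact hc
    | pred y hyc ih =>
      exact step y ⟨by omega, hyc⟩ (y - 1) ⟨hdy, by omega⟩ (by simp) (ih (by omega))

theorem Set.exists_ordConnected_prod_eq {α β : Type*} [Lattice α] [Lattice β] {T : Set (α × β)}
    (hT : ∀ p ∈ T, ∀ q ∈ T, [[p, q]] ⊆ T) :
    ∃ I J, OrdConnected I ∧ OrdConnected J ∧ T = I ×ˢ J := by
  refine ⟨Prod.fst '' T, Prod.snd '' T, ⟨?_⟩, ⟨?_⟩, ?_⟩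
  · rintro _ ⟨p, hp, rfl⟩ _ ⟨q, hq, rfl⟩ x hx
    refine ⟨(x, p.2), hT p hp q hq ?_, rfl⟩
    rw [uIcc_prod_eq]
    exact ⟨Icc_subset_uIcc hx, left_mem_uIcc⟩
  · rintro _ ⟨p, hp, rfl⟩ _ ⟨q, hq, rfl⟩ y hy
    refine ⟨(p.1, y), hT p hp q hq ?_, rfl⟩
    rw [uIcc_prod_eq]
    exact ⟨left_mem_uIcc, Icc_subset_uIcc hy⟩
  · refine Subset.antisymm (fun x hx => ⟨mem_image_of_mem _ hx, mem_image_of_mem _ hx⟩) ?_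
    rintro x ⟨⟨p, hp, hpx⟩, ⟨q, hq, hqx⟩⟩
    refine hT p hp q hq ?_
    rw [uIcc_prod_eq]
    exact ⟨hpx ▸ left_mem_uIcc, hqx ▸ right_mem_uIcc⟩

theorem SimpleGraph.mem_of_adj_of_adj {V : Type*} (G : SimpleGraph V) {S : Set V}
    (hS : ∀ v ∉ S, {u | u ∈ S ∧ G.Adj v u}.Subsingleton) {p q r : V} (hp : p ∈ S)
    (hq : q ∈ S) (hpq : p ≠ q) (hrp : G.Adj r p) (hrq : G.Adj r q) : r ∈ S := by
  by_contra hr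
  exact hpq (hS r hr ⟨hp, hrp⟩ ⟨hq, hrq⟩)

theorem latticeGraph_adj_iff {p q : ℤ × ℤ} :
    latticeGraph.Adj p q ↔ p.2 = q.2 ∧ |p.1 - q.1| = 1 ∨ p.1 = q.1 ∧ |p.2 - q.2| = 1 := by
  change |p.1 - q.1| + |p.2 - q.2| = 1 ↔ _
  grind

theorem latticeGraph_adj_mk_left {a y z : ℤ} :
    latticeGraph.Adj (a, y) (a, z) ↔ |y - z| = 1 := by
  simp [latticeGraph_adj_iff]

theorem latticeGraph_adj_mk_right {a b y : ℤ} :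
    latticeGraph.Adj (a, y) (b, y) ↔ |a - b| = 1 := by
  simp [latticeGraph_adj_iff]

section CommonNeighbourClosed

variable {T : Set (ℤ × ℤ)}
  (hT : ∀ ⦃s t u⦄, s ∈ T → t ∈ T → s ≠ t → latticeGraph.Adj u s → latticeGraph.Adj u t → u ∈ T)
include hT

theorem mk_mem_of_mem_adjacent_column {a b c d : ℤ} (hab : |a - b| = 1) (hc : (a, c) ∈ T)
    (hcol : ∀ y ∈ [[c, d]], (b, y) ∈ T) : ∀ y ∈ [[c, d]], (a, y) ∈ T :=
  Int.forall_mem_uIcc_of_step hc fun y _ z hz hyz hy =>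
    hT hy (hcol z hz) (by grind) (latticeGraph_adj_mk_left.2 (by grind))
      (latticeGraph_adj_mk_right.2 hab)

theorem mk_mem_of_mem_adjacent_row {a b c d : ℤ} (hab : |a - b| = 1) (hc : (c, a) ∈ T)
    (hrow : ∀ x ∈ [[c, d]], (x, b) ∈ T) : ∀ x ∈ [[c, d]], (x, a) ∈ T :=
  Int.forall_mem_uIcc_of_step hc fun x _ z hz hxz hx =>
    hT hx (hrow z hz) (by grind) (latticeGraph_adj_mk_right.2 (by grind))
      (latticeGraph_adj_mk_left.2 hab)

theorem uIcc_subset_of_adj {p q r : ℤ × ℤ} (hpq : [[p, q]] ⊆ T) (hr : r ∈ T)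
    (hqr : latticeGraph.Adj q r) : [[p, r]] ⊆ T := by
  rw [uIcc_prod_eq] at hpq ⊢
  rintro ⟨x, y⟩ ⟨hx, hy⟩
  rcases latticeGraph_adj_iff.1 hqr with ⟨h2, h1⟩ | ⟨h1, h2⟩
  · by_cases hxq : x ∈ [[p.1, q.1]]
    · exact hpq ⟨hxq, h2 ▸ hy⟩
    · obtain rfl : x = r.1 := by simp only [mem_uIcc] at hx hxq; grind
      refine mk_mem_of_mem_adjacent_column hT (abs_sub_comm q.1 r.1 ▸ h1) (c := r.2) hr
        (fun y hy => hpq ⟨right_mem_uIcc, ?_⟩) y (uIcc_comm p.2 r.2 ▸ hy)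
      rwa [uIcc_comm, h2]
  · by_cases hyq : y ∈ [[p.2, q.2]]
    · exact hpq ⟨h1 ▸ hx, hyq⟩
    · obtain rfl : y = r.2 := by simp only [mem_uIcc] at hy hyq; grind
      refine mk_mem_of_mem_adjacent_row hT (abs_sub_comm q.2 r.2 ▸ h2) (c := r.1) hr
        (fun x hx => hpq ⟨?_, right_mem_uIcc⟩) x (uIcc_comm p.1 r.1 ▸ hx)
      rwa [uIcc_comm, h1]

theorem uIcc_subset_of_reachable {S : Set (ℤ × ℤ)}
    (hTS : ∀ ⦃q r⦄, q ∈ T → r ∈ S → latticeGraph.Adj q r → r ∈ T) {p q : S}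
    (hp : (p : ℤ × ℤ) ∈ T) (hpq : (latticeGraph.induce S).Reachable p q) :
    [[(p : ℤ × ℤ), q]] ⊆ T := by
  rw [SimpleGraph.reachable_iff_reflTransGen] at hpq
  induction hpq with
  | refl => simpa using hp
  | tail _ hqr ih =>
    exact uIcc_subset_of_adj hT ih (hTS (ih right_mem_uIcc) (Subtype.prop _) hqr) hqr

end CommonNeighbourClosed

/-- Every connected component of the subgraph of the lattice induced by a perfect
dominating set `S` is, as a vertex set, a product `I ×ˢ J` of two (possibly infinite)
intervals of integers. -/
theorem stmt_2 (S : Set (ℤ × ℤ))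
    (hPDS : ∀ v ∉ S, ∃! u, u ∈ S ∧ latticeGraph.Adj v u)
    (v : ℤ × ℤ) (hv : v ∈ S) :
    ∃ I J : Set ℤ, I.OrdConnected ∧ J.OrdConnected ∧
      {w : ℤ × ℤ | ∃ hw : w ∈ S, (latticeGraph.induce S).Reachable ⟨v, hv⟩ ⟨w, hw⟩}
        = I ×ˢ J := by
  set C := {w : ℤ × ℤ | ∃ hw : w ∈ S, (latticeGraph.induce S).Reachable ⟨v, hv⟩ ⟨w, hw⟩}
  have hCS : ∀ ⦃q r⦄, q ∈ C → r ∈ S → latticeGraph.Adj q r → r ∈ C :=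
    fun q r ⟨_, hvq⟩ hr hqr =>
      ⟨hr, hvq.trans (SimpleGraph.Adj.reachable (G := latticeGraph.induce S) hqr)⟩
  have hS : ∀ w ∉ S, {u | u ∈ S ∧ latticeGraph.Adj w u}.Subsingleton :=
    fun w hw _ h₁ _ h₂ => (hPDS w hw).unique h₁ h₂
  have hC : ∀ ⦃s t u⦄, s ∈ C → t ∈ C → s ≠ t → latticeGraph.Adj u s → latticeGraph.Adj u t →
      u ∈ C := fun s t u hs ht hst hus hut =>
    hCS hs (latticeGraph.mem_of_adj_of_adj hS hs.1 ht.1 hst hus hut) hus.symm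
  apply exists_ordConnected_prod_eq
  rintro p ⟨hpS, hvp⟩ q ⟨_, hvq⟩
  exact uIcc_subset_of_reachable hC hCS (p := ⟨p, hpS⟩) ⟨hpS, hvp⟩ (hvp.symm.trans hvq)
end

section
/- Let G be the m × n grid graph with vertex set {0,...,m-1} × {0,...,n-1} and edges between vertices at ℓ¹-distance 1. Every connected component of the subgraph induced by a perfect dominating set S in G has vertex set of the form {a,...,a+r-1} × {c,...,c+s-1} for some 1 ≤ r ≤ m and 1 ≤ s ≤ n. -/
/-- The vertex set of the m × n grid: {0,...,m-1} × {0,...,n-1} inside ℤ × ℤ. -/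
def gridBox (m n : ℤ) : Set (ℤ × ℤ) := Set.Icc 0 (m - 1) ×ˢ Set.Icc 0 (n - 1)

/-- The m × n grid graph, realized on vertex set ℤ × ℤ (edges only inside the box). -/
def gridGraph (m n : ℤ) : SimpleGraph (ℤ × ℤ) where
  Adj p q := p ∈ gridBox m n ∧ q ∈ gridBox m n ∧ |p.1 - q.1| + |p.2 - q.2| = 1
  symm := ⟨fun p q ⟨hp, hq, h⟩ => by
    refine ⟨hq, hp, ?_⟩
    rw [abs_sub_comm q.1 p.1, abs_sub_comm q.2 p.2]; exact h⟩
  loopless := ⟨fun p ⟨_, _, h⟩ => by simp at h⟩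

/-!
Let `C` be the component of `v`. Three corners of a unit square in `C` force the fourth corner
into `S`: otherwise it would be a vertex outside `S` with two distinct neighbours in `S`. So `C`
is closed under completing unit squares. Along a lattice path inside such a set, completing squares
row by row (or column by column) keeps the bounding box of the path's endpoints inside the set;
three such boxes cover the bounding box of a finite connected set, which is therefore a rectangle.
-/

open Set Relation

theorem Int.forall_mem_Icc_of_iff_add_one {Q : ℤ → Prop} {lo hi x₀ : ℤ}
    (hstep : ∀ x, lo ≤ x → x < hi → (Q x ↔ Q (x + 1))) (hx₀ : x₀ ∈ Icc lo hi) (hQ : Q x₀) :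
    ∀ x ∈ Icc lo hi, Q x := by
  obtain ⟨hlo₀, hhi₀⟩ := hx₀
  rintro x ⟨hlo, hhi⟩
  rcases le_total x₀ x with hx | hx
  · induction x, hx using Int.leInduction with
    | base => exact hQ
    | succ x hx ih => exact (hstep x (by omega) (by omega)).1 (ih (by omega) (by omega))
  · induction x, hx using Int.leInductionDown with
    | base => exact hQ
    | pred x hx ih =>
      exact (hstep (x - 1) hlo (by omega)).2 (by simpa using ih (by omega) (by omega))

def LatticeAdj (p q : ℤ × ℤ) : Prop := |p.1 - q.1| + |p.2 - q.2| = 1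

def LatticeAdjIn (D : Set (ℤ × ℤ)) (p q : ℤ × ℤ) : Prop := p ∈ D ∧ q ∈ D ∧ LatticeAdj p q

def SquareClosed (D : Set (ℤ × ℤ)) : Prop :=
  ∀ ⦃x x' y y' : ℤ⦄, |x - x'| = 1 → |y - y'| = 1 →
    (x, y) ∈ D → (x', y) ∈ D → (x, y') ∈ D → (x', y') ∈ D

theorem latticeAdj_iff {p q : ℤ × ℤ} :
    LatticeAdj p q ↔ p.1 = q.1 ∧ |p.2 - q.2| = 1 ∨ p.2 = q.2 ∧ |p.1 - q.1| = 1 := by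
  unfold LatticeAdj
  grind

namespace SquareClosed

variable {D : Set (ℤ × ℤ)}

theorem preimage_swap (hD : SquareClosed D) : SquareClosed (Prod.swap ⁻¹' D) :=
  fun _ _ _ _ hx hy h₁ h₂ h₃ => hD hy hx h₁ h₃ h₂

theorem Icc_prod_singleton_subset (hD : SquareClosed D) {lo hi x₀ y y' : ℤ}
    (hrow : Icc lo hi ×ˢ {y} ⊆ D) (hy : |y - y'| = 1) (hx₀ : x₀ ∈ Icc lo hi)
    (h₀ : (x₀, y') ∈ D) : Icc lo hi ×ˢ {y'} ⊆ D := by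
  rintro ⟨x, z⟩ ⟨hx, hz : z = y'⟩
  subst z
  refine Int.forall_mem_Icc_of_iff_add_one (Q := fun x => (x, y') ∈ D) ?_ hx₀ h₀ x hx
  intro x hlo hhi
  have hx : (x, y) ∈ D := hrow ⟨⟨hlo, hhi.le⟩, rfl⟩
  have hx' : (x + 1, y) ∈ D := hrow ⟨⟨by omega, hhi⟩, rfl⟩
  exact ⟨hD (by norm_num) hy hx hx', hD (by norm_num) hy hx' hx⟩

theorem singleton_prod_Icc_subset (hD : SquareClosed D) {lo hi x x' y₀ : ℤ}
    (hcol : {x} ×ˢ Icc lo hi ⊆ D) (hx : |x - x'| = 1) (hy₀ : y₀ ∈ Icc lo hi)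
    (h₀ : (x', y₀) ∈ D) : {x'} ×ˢ Icc lo hi ⊆ D := by
  have := hD.preimage_swap.Icc_prod_singleton_subset (fun p hp => hcol ⟨hp.2, hp.1⟩) hx hy₀ h₀
  exact fun p hp => @this p.swap ⟨hp.2, hp.1⟩

theorem uIcc_prod_uIcc_subset (hD : SquareClosed D) {p q : ℤ × ℤ} (hp : p ∈ D)
    (hpq : ReflTransGen (LatticeAdjIn D) p q) : uIcc p.1 q.1 ×ˢ uIcc p.2 q.2 ⊆ D := by
  induction hpq with
  | refl => simpa
  | @tail b c _ hbc ih =>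
    obtain ⟨-, hc, hbc⟩ := hbc
    rintro ⟨x, y⟩ ⟨hx, hy⟩
    rcases latticeAdj_iff.1 hbc with ⟨h₁, h₂⟩ | ⟨h₂, h₁⟩
    · rw [← h₁] at hx
      by_cases hyb : y ∈ uIcc p.2 b.2
      · exact ih ⟨hx, hyb⟩
      · have hyc : y = c.2 := by simp only [mem_uIcc] at hy hyb; grind
        subst hyc
        exact hD.Icc_prod_singleton_subset (fun w hw => ih ⟨hw.1, hw.2 ▸ right_mem_uIcc⟩) h₂
          right_mem_uIcc (by rwa [h₁]) ⟨hx, rfl⟩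
    · rw [← h₂] at hy
      by_cases hxb : x ∈ uIcc p.1 b.1
      · exact ih ⟨hxb, hy⟩
      · have hxc : x = c.1 := by simp only [mem_uIcc] at hx hxb; grind
        subst hxc
        exact hD.singleton_prod_Icc_subset (fun w hw => ih ⟨hw.1 ▸ right_mem_uIcc, hw.2⟩) h₁
          right_mem_uIcc (by rwa [h₂]) ⟨rfl, hy⟩

theorem eq_Icc_prod_Icc (hD : SquareClosed D) (hfin : D.Finite) (hne : D.Nonempty)
    (hconn : ∀ p ∈ D, ∀ q ∈ D, ReflTransGen (LatticeAdjIn D) p q) :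
    ∃ a b c d : ℤ, a ≤ b ∧ c ≤ d ∧ D = Icc a b ×ˢ Icc c d := by
  have hbox {p} (hp : p ∈ D) {q} (hq : q ∈ D) : uIcc p.1 q.1 ×ˢ uIcc p.2 q.2 ⊆ D :=
    hD.uIcc_prod_uIcc_subset hp (hconn p hp q hq)
  obtain ⟨pa, hpa, ha⟩ := D.exists_min_image Prod.fst hfin hne
  obtain ⟨pb, hpb, hb⟩ := D.exists_max_image Prod.fst hfin hne
  obtain ⟨pc, hpc, hc⟩ := D.exists_min_image Prod.snd hfin hne
  obtain ⟨pd, hpd, hd⟩ := D.exists_max_image Prod.snd hfin hne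
  refine ⟨pa.1, pb.1, pc.2, pd.2, ha pb hpb, hc pd hpd, ?_⟩
  refine subset_antisymm (fun w hw => ⟨⟨ha w hw, hb w hw⟩, hc w hw, hd w hw⟩) ?_
  rintro ⟨x, y⟩ ⟨hx, hy⟩
  have hxa : (x, pa.2) ∈ D := hbox hpa hpb ⟨Icc_subset_uIcc hx, left_mem_uIcc⟩
  have hyc : (pc.1, y) ∈ D := hbox hpc hpd ⟨left_mem_uIcc, Icc_subset_uIcc hy⟩
  exact hbox hxa hyc ⟨left_mem_uIcc, right_mem_uIcc⟩

end SquareClosed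

namespace SimpleGraph

variable {V : Type*} {G : SimpleGraph V} {S : Set V} {v : V}

def inducedComponent (G : SimpleGraph V) (S : Set V) (v : V) (hv : v ∈ S) : Set V :=
  {w | ∃ hw : w ∈ S, (G.induce S).Reachable ⟨v, hv⟩ ⟨w, hw⟩}

theorem inducedComponent_subset (hv : v ∈ S) : G.inducedComponent S v hv ⊆ S :=
  fun _ ⟨hw, _⟩ => hw

theorem self_mem_inducedComponent (hv : v ∈ S) : v ∈ G.inducedComponent S v hv :=
  ⟨hv, Reachable.refl _⟩

theorem mem_inducedComponent_of_adj (hv : v ∈ S) {a b : V} (ha : a ∈ G.inducedComponent S v hv)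
    (hb : b ∈ S) (hab : G.Adj a b) : b ∈ G.inducedComponent S v hv :=
  ⟨hb, ha.2.trans (induce_adj.2 hab).reachable⟩

theorem reflTransGen_of_mem_inducedComponent (hv : v ∈ S) {a b : V}
    (ha : a ∈ G.inducedComponent S v hv) (hb : b ∈ G.inducedComponent S v hv) :
    ReflTransGen (fun x y => x ∈ G.inducedComponent S v hv ∧ y ∈ G.inducedComponent S v hv ∧
      G.Adj x y) a b := by
  have hab := (reachable_iff_reflTransGen _ _).1 (ha.2.symm.trans hb.2)
  suffices ∀ c : S, ReflTransGen (G.induce S).Adj ⟨a, ha.1⟩ c →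
      ReflTransGen _ a c ∧ c.1 ∈ G.inducedComponent S v hv from (this ⟨b, hb.1⟩ hab).1
  intro c hc
  induction hc with
  | refl => exact ⟨.refl, ha⟩
  | @tail c d _ hcd ih =>
    have hd := mem_inducedComponent_of_adj hv ih.2 d.2 hcd
    exact ⟨ih.1.tail ⟨ih.2, hd, hcd⟩, hd⟩

end SimpleGraph

theorem squareClosed_inducedComponent {m n : ℤ} {S : Set (ℤ × ℤ)} (hS : S ⊆ gridBox m n)
    (hPDS : ∀ v ∈ gridBox m n, v ∉ S → ∃! u, u ∈ S ∧ (gridGraph m n).Adj v u)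
    {v : ℤ × ℤ} (hv : v ∈ S) : SquareClosed ((gridGraph m n).inducedComponent S v hv) := by
  set C := (gridGraph m n).inducedComponent S v hv
  have hCS : C ⊆ S := SimpleGraph.inducedComponent_subset hv
  intro x x' y y' hx hy _ h₂ h₃
  have hbox : (x', y') ∈ gridBox m n := ⟨(hS (hCS h₂)).1, (hS (hCS h₃)).2⟩
  have hadj₂ : (gridGraph m n).Adj (x', y') (x', y) :=
    ⟨hbox, hS (hCS h₂), by simpa [abs_sub_comm] using hy⟩
  have hadj₃ : (gridGraph m n).Adj (x', y') (x, y') :=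
    ⟨hbox, hS (hCS h₃), by simpa [abs_sub_comm] using hx⟩
  by_cases hS' : (x', y') ∈ S
  · exact SimpleGraph.mem_inducedComponent_of_adj hv h₂ hS' hadj₂.symm
  · obtain ⟨u, -, hu⟩ := hPDS _ hbox hS'
    have hsame : (x', y) = (x, y') := (hu _ ⟨hCS h₂, hadj₂⟩).trans (hu _ ⟨hCS h₃, hadj₃⟩).symm
    obtain rfl : x' = x := (Prod.ext_iff.1 hsame).1
    simp at hx

theorem stmt_3_general (m n : ℤ) (S : Set (ℤ × ℤ))
    (hS : S ⊆ gridBox m n)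
    (hPDS : ∀ v ∈ gridBox m n, v ∉ S → ∃! u, u ∈ S ∧ (gridGraph m n).Adj v u)
    (v : ℤ × ℤ) (hv : v ∈ S) :
    ∃ a c r s : ℤ, 1 ≤ r ∧ r ≤ m ∧ 1 ≤ s ∧ s ≤ n ∧
      {w : ℤ × ℤ | ∃ hw : w ∈ S, ((gridGraph m n).induce S).Reachable ⟨v, hv⟩ ⟨w, hw⟩}
        = Set.Icc a (a + r - 1) ×ˢ Set.Icc c (c + s - 1) := by
  set C := (gridGraph m n).inducedComponent S v hv
  have hCbox : C ⊆ gridBox m n := (SimpleGraph.inducedComponent_subset hv).trans hS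
  have hfin : C.Finite := ((finite_Icc _ _).prod (finite_Icc _ _)).subset hCbox
  have hconn : ∀ p ∈ C, ∀ q ∈ C, ReflTransGen (LatticeAdjIn C) p q := fun p hp q hq =>
    ReflTransGen.mono (fun _ _ ⟨hx, hy, hxy⟩ => ⟨hx, hy, hxy.2.2⟩) _ _
      (SimpleGraph.reflTransGen_of_mem_inducedComponent hv hp hq)
  obtain ⟨a, b, c, d, hab, hcd, hC⟩ := (squareClosed_inducedComponent hS hPDS hv).eq_Icc_prod_Icc
    hfin ⟨v, SimpleGraph.self_mem_inducedComponent hv⟩ hconn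
  have hrect : Icc a b ×ˢ Icc c d ⊆ gridBox m n := hC ▸ hCbox
  obtain ⟨⟨ha, -⟩, hc, -⟩ := @hrect (a, c) ⟨left_mem_Icc.2 hab, left_mem_Icc.2 hcd⟩
  obtain ⟨⟨-, hb⟩, -, hd⟩ := @hrect (b, d) ⟨right_mem_Icc.2 hab, right_mem_Icc.2 hcd⟩
  refine ⟨a, c, b - a + 1, d - c + 1, by omega, by omega, by omega, by omega, ?_⟩
  rw [show a + (b - a + 1) - 1 = b by ring, show c + (d - c + 1) - 1 = d by ring]
  exact hC

/-- Every connected component of the subgraph of the m × n grid graph induced by a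
perfect dominating set `S` has vertex set `{a,...,a+r-1} × {c,...,c+s-1}` with
`1 ≤ r ≤ m` and `1 ≤ s ≤ n`. -/
theorem stmt_3 (m n : ℤ) (hm : 1 ≤ m) (hn : 1 ≤ n) (S : Set (ℤ × ℤ))
    (hS : S ⊆ gridBox m n)
    (hPDS : ∀ v ∈ gridBox m n, v ∉ S → ∃! u, u ∈ S ∧ (gridGraph m n).Adj v u)
    (v : ℤ × ℤ) (hv : v ∈ S) :
    ∃ a c r s : ℤ, 1 ≤ r ∧ r ≤ m ∧ 1 ≤ s ∧ s ≤ n ∧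
      {w : ℤ × ℤ | ∃ hw : w ∈ S, ((gridGraph m n).induce S).Reachable ⟨v, hv⟩ ⟨w, hw⟩}
        = Set.Icc a (a + r - 1) ×ˢ Set.Icc c (c + s - 1) :=
  stmt_3_general m n S hS hPDS v hv
end

section
/- If the m × n grid graph (with m, n ≥ 2) contains a total perfect code, then m·n is even. -/
/-! Every lattice cell has an even number of neighbours on a diagonal line `x + y = t`. Grouping
the cells of a diagonal segment by their unique neighbour in the code therefore gives classes of
even size, except for the classes of the four cells next to the ends of the segment: a segment of
odd length forces one of these four cells into the code. For odd `m ≤ n`, the diagonals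
`x + y = n - 1`, `n - 3` and `n + 1` of the box, together with uniqueness at the corner
`(0, n - 1)`, force both `(m - 1, n - 1 - m)` and `(m - 1, n + 1 - m)` into the code, and then
`(m - 1, n - m)` has two neighbours in it. -/

open Finset

def IsTotalPerfectCode (V S : Set (ℤ × ℤ)) : Prop :=
  S ⊆ V ∧ ∀ v ∈ V, ∃! u, u ∈ S ∧ latAdj v u

lemma latAdj_iff {a b c d : ℤ} :
    latAdj (a, b) (c, d) ↔
      (a = c + 1 ∧ b = d) ∨ (a = c - 1 ∧ b = d) ∨ (a = c ∧ b = d + 1) ∨ (a = c ∧ b = d - 1) := by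
  show |a - c| + |b - d| = 1 ↔ _
  rcases abs_cases (a - c) with ⟨h₁, _⟩ | ⟨h₁, _⟩ <;>
    rcases abs_cases (b - d) with ⟨h₂, _⟩ | ⟨h₂, _⟩ <;> rw [h₁, h₂] <;> omega

lemma latAdj_swap {p q : ℤ × ℤ} : latAdj p.swap q.swap ↔ latAdj p q := by
  simp only [latAdj, Prod.fst_swap, Prod.snd_swap, add_comm]

instance (p q : ℤ × ℤ) : Decidable (latAdj p q) := inferInstanceAs (Decidable (_ = _))

namespace IsTotalPerfectCode

variable {V S : Set (ℤ × ℤ)}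

lemma eq_of_latAdj (hS : IsTotalPerfectCode V S) {v u u' : ℤ × ℤ} (hv : v ∈ V)
    (hu : u ∈ S) (hu' : u' ∈ S) (huv : latAdj v u) (hu'v : latAdj v u') : u = u' :=
  (hS.2 v hv).unique ⟨hu, huv⟩ ⟨hu', hu'v⟩

lemma preimage_swap (hS : IsTotalPerfectCode V S) :
    IsTotalPerfectCode (Prod.swap ⁻¹' V) (Prod.swap ⁻¹' S) := by
  refine ⟨Set.preimage_mono hS.1, fun v hv => ?_⟩
  refine (Equiv.prodComm ℤ ℤ).existsUnique_congr (fun u => ?_) |>.1 (hS.2 v.swap hv)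
  rw [← latAdj_swap, Prod.swap_swap]
  rfl

end IsTotalPerfectCode

noncomputable def diagSeg (t a b : ℤ) : Finset (ℤ × ℤ) := (Icc a b).image fun i => (i, t - i)

lemma injective_pair_sub (t : ℤ) : Function.Injective fun i : ℤ => (i, t - i) :=
  fun _ _ h => (Prod.mk.inj h).1

lemma card_diagSeg (t a b : ℤ) : #(diagSeg t a b) = (b + 1 - a).toNat := by
  rw [diagSeg, card_image_of_injective _ (injective_pair_sub t), Int.card_Icc]

lemma diagSeg_subset_gridBox {m n t a b : ℤ} (ha : 0 ≤ a) (hb : b ≤ m - 1) (hta : t - a ≤ n - 1)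
    (htb : 0 ≤ t - b) : ↑(diagSeg t a b) ⊆ gridBox m n := by
  intro p hp
  obtain ⟨i, hi, rfl⟩ := mem_image.1 (mem_coe.1 hp)
  rw [mem_Icc] at hi
  simp only [gridBox, Set.mem_prod, Set.mem_Icc]
  omega

lemma even_card_filter_latAdj_diagSeg {t a b x y : ℤ} (h₁ : (x, y) ≠ (a, t + 1 - a))
    (h₂ : (x, y) ≠ (b + 1, t - b)) (h₃ : (x, y) ≠ (a - 1, t - a)) (h₄ : (x, y) ≠ (b, t - 1 - b)) :
    Even #((diagSeg t a b).filter (latAdj · (x, y))) := by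
  simp only [ne_eq, Prod.mk.injEq] at h₁ h₂ h₃ h₄
  rw [diagSeg, filter_image, card_image_of_injective _ (injective_pair_sub t), Nat.even_iff]
  by_cases hup : x + y = t + 1
  · have : (Icc a b).filter (fun i => latAdj (i, t - i) (x, y)) =
        Icc (max a (x - 1)) (min b x) := by
      ext i; simp only [mem_filter, mem_Icc, latAdj_iff]; omega
    rw [this, Int.card_Icc]; omega
  by_cases hdown : x + y = t - 1
  · have : (Icc a b).filter (fun i => latAdj (i, t - i) (x, y)) =
        Icc (max a x) (min b (x + 1)) := by
      ext i; simp only [mem_filter, mem_Icc, latAdj_iff]; omega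
    rw [this, Int.card_Icc]; omega
  · have : (Icc a b).filter (fun i => latAdj (i, t - i) (x, y)) = ∅ := by
      ext i; simp only [mem_filter, mem_Icc, latAdj_iff, Finset.notMem_empty, iff_false]; omega
    rw [this, card_empty]

lemma exists_diagSeg_end_mem {S : Set (ℤ × ℤ)} {t a b : ℤ}
    (hS : ∀ v ∈ diagSeg t a b, ∃! u, u ∈ S ∧ latAdj v u) (hab : a ≤ b) (hodd : Even (b - a)) :
    (a, t + 1 - a) ∈ S ∨ (b + 1, t - b) ∈ S ∨ (a - 1, t - a) ∈ S ∨ (b, t - 1 - b) ∈ S := by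
  by_contra! ⟨h₁, h₂, h₃, h₄⟩
  have hcover : ∀ v ∈ diagSeg t a b, ∃ u, u ∈ S ∧ latAdj v u := fun v hv => (hS v hv).exists
  choose! g hg using hcover
  have hfiber : ∀ u ∈ (diagSeg t a b).image g,
      (diagSeg t a b).filter (g · = u) = (diagSeg t a b).filter (latAdj · u) := by
    intro u hu
    obtain ⟨v₀, hv₀, rfl⟩ := mem_image.1 hu
    ext v
    simp only [mem_filter, and_congr_right_iff]
    intro hv
    exact ⟨fun h => h ▸ (hg v hv).2, fun h => (hS v hv).unique (hg v hv) ⟨(hg v₀ hv₀).1, h⟩⟩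
  have hsum : Even #(diagSeg t a b) := by
    rw [card_eq_sum_card_image g]
    refine Finset.even_sum _ fun u hu => ?_
    obtain ⟨v₀, hv₀, rfl⟩ := mem_image.1 hu
    have hmem := (hg v₀ hv₀).1
    rw [hfiber _ hu]
    exact even_card_filter_latAdj_diagSeg (fun h => h₁ (h ▸ hmem)) (fun h => h₂ (h ▸ hmem))
      (fun h => h₃ (h ▸ hmem)) (fun h => h₄ (h ▸ hmem))
  rw [card_diagSeg, Nat.even_iff] at hsum
  rw [Int.even_iff] at hodd
  omega

lemma preimage_swap_gridBox (m n : ℤ) : Prod.swap ⁻¹' gridBox m n = gridBox n m :=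
  Set.preimage_swap_prod _ _

lemma not_isTotalPerfectCode_gridBox {m n : ℤ} (hm : 2 ≤ m) (hmn : m ≤ n) (hm2 : Odd m)
    (hn2 : Odd n) (S : Set (ℤ × ℤ)) : ¬ IsTotalPerfectCode (gridBox m n) S := by
  intro hS
  rw [Int.odd_iff] at hm2 hn2
  have hbox : ∀ {x y}, (x, y) ∈ S → 0 ≤ x ∧ x ≤ m - 1 ∧ 0 ≤ y ∧ y ≤ n - 1 := fun h => by
    simpa only [gridBox, Set.mem_prod, Set.mem_Icc, and_assoc] using hS.1 h
  have hcongr : ∀ {x y x' y'}, (x, y) ∈ S → x = x' → y = y' → (x', y') ∈ S := by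
    rintro _ _ _ _ h rfl rfl; exact h
  have hseg : ∀ {t a b}, 0 ≤ a → b ≤ m - 1 → t - a ≤ n - 1 → 0 ≤ t - b → Even (b - a) →
      a ≤ b → (a, t + 1 - a) ∈ S ∨ (b + 1, t - b) ∈ S ∨ (a - 1, t - a) ∈ S ∨ (b, t - 1 - b) ∈ S :=
    fun ha hb hta htb hodd hab => exists_diagSeg_end_mem
      (fun v hv => hS.2 v (diagSeg_subset_gridBox ha hb hta htb hv)) hab hodd
  have hmid : ∀ {x y}, (x, y) ∈ S → (x, y + 2) ∈ S → False := fun {x y} h h₂ => by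
    have := hbox h
    have := hbox h₂
    have := hS.eq_of_latAdj (v := (x, y + 1)) (Set.mk_mem_prod ⟨by omega, by omega⟩
      ⟨by omega, by omega⟩) h h₂ (latAdj_iff.2 (by omega)) (latAdj_iff.2 (by omega))
    simp only [Prod.mk.injEq] at this; omega
  have hlow : (m - 1, n - 1 - m) ∈ S := by
    rcases hseg (t := n - 1) (a := 0) (b := m - 1) le_rfl le_rfl (by omega) (by omega)
      (by rw [Int.even_iff]; omega) (by omega) with h | h | h | h
    all_goals first
      | exact absurd (hbox h) (by omega)
      | exact hcongr h (by omega) (by omega)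
  have hgap : m + 2 ≤ n := by have := hbox hlow; omega
  have hleft : (0, n - 2) ∈ S := by
    rcases hseg (t := n - 3) (a := 0) (b := m - 1) le_rfl le_rfl (by omega) (by omega)
      (by rw [Int.even_iff]; omega) (by omega) with h | h | h | h
    all_goals first
      | exact absurd (hbox h) (by omega)
      | exact hcongr h (by omega) (by omega)
      | exact (hmid h (hcongr hlow rfl (by omega))).elim
  have htop : (1, n - 1) ∉ S := fun h => by
    have := hS.eq_of_latAdj (v := (0, n - 1))
      (Set.mk_mem_prod ⟨le_rfl, by omega⟩ ⟨by omega, le_rfl⟩) h hleft (latAdj_iff.2 (by omega)) (latAdj_iff.2 (by omega))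
    simp only [Prod.mk.injEq] at this; omega
  have hhigh : (m - 1, n + 1 - m) ∈ S := by
    rcases hseg (t := n + 1) (a := 2) (b := m - 1) (by omega) le_rfl (by omega) (by omega)
      (by rw [Int.even_iff]; omega) (by omega) with h | h | h | h
    all_goals first
      | exact absurd (hbox h) (by omega)
      | exact hcongr h (by omega) (by omega)
      | exact (htop (hcongr h rfl (by omega))).elim
  exact hmid hlow (hcongr hhigh rfl (by omega))

/-- If the m × n grid graph (m, n ≥ 2) contains a total perfect code, then m·n is even. -/
theorem stmt_8 (m n : ℤ) (hm : 2 ≤ m) (hn : 2 ≤ n)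
    (hTPC : ∃ S : Set (ℤ × ℤ), S ⊆ gridBox m n ∧
      ∀ v ∈ gridBox m n, ∃! u, u ∈ S ∧ latAdj v u) :
    Even (m * n) := by
  obtain ⟨S, hS⟩ := hTPC
  by_contra hodd
  rw [Int.even_mul, not_or, Int.not_even_iff_odd, Int.not_even_iff_odd] at hodd
  rcases le_total m n with h | h
  · exact not_isTotalPerfectCode_gridBox hm h hodd.1 hodd.2 S hS
  · refine not_isTotalPerfectCode_gridBox hn h hodd.2 hodd.1 (Prod.swap ⁻¹' S) ?_
    rw [← preimage_swap_gridBox]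
    exact IsTotalPerfectCode.preimage_swap hS
end
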